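/- arXiv:1412.0376 — 7 statements merged into one kernel-verified Lean document; each statement's English description precedes it below -/
import Mathlib

section
/- The set H_λ(v) = G¹_λ ∪ G²_λ(v) is a maximal subset of the germ G_λ(v): any pair (u₋,u₊) ∈ ℝ² satisfying Ξ_v((u₋,u₊),(b₋,b₊)) ≥ 0 for all (b₋,b₊) ∈ H_λ(v) belongs to G_λ(v). -/
lemma sign_mul_self' (a : ℝ) : Real.sign a * a = |a| := by
  rcases lt_trichotomy a 0 with h | h | h
  · rw [Real.sign_of_neg h, abs_of_neg h]; ring
  · simp [h]
  · rw [Real.sign_of_pos h, abs_of_pos h]; ring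

lemma abs_mul_le_imp (a b : ℝ) (h : |b| * b ≤ |a| * a) : b ≤ a := by
  by_contra hc
  push_neg at hc
  rcases le_or_gt 0 a with h1 | h1
  · rw [abs_of_nonneg h1, abs_of_nonneg (by linarith : (0:ℝ) ≤ b)] at h; nlinarith
  · rcases le_or_gt 0 b with h2 | h2
    · rw [abs_of_neg h1, abs_of_nonneg h2] at h; nlinarith
    · rw [abs_of_neg h1, abs_of_neg h2] at h; nlinarith

/-- Maximality of `H_λ(v) = G¹_λ ∪ G²_λ(v)`: any pair with `Ξ_v ≥ 0` against all of
`H_λ(v)` belongs to the germ `G_λ(v) = G¹_λ ∪ G²_λ(v) ∪ G³_λ(v)`. -/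
theorem germ_maximal_subset (l : ℝ) (hl : 0 < l) (v um up : ℝ)
    (h : ∀ bm bp : ℝ,
      (bm = bp + l ∨ (v ≤ bm ∧ bm ≤ v + l ∧ v - l ≤ bp ∧ bp ≤ v ∧ bm - bp < l)) →
      Real.sign (um - bm) * ((um ^ 2 / 2 - v * um) - (bm ^ 2 / 2 - v * bm)) -
        Real.sign (up - bp) * ((up ^ 2 / 2 - v * up) - (bp ^ 2 / 2 - v * bp)) ≥ 0) :
    um = up + l ∨
      (v ≤ um ∧ um ≤ v + l ∧ v - l ≤ up ∧ up ≤ v ∧ um - up < l) ∨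
      (-l ≤ up + um - 2 * v ∧ up + um - 2 * v ≤ l ∧ um - up > l) := by
  -- Reformulate the hypothesis: Ξ against (v+s, v+t)
  have key : ∀ a c : ℝ, Real.sign a * (a * c / 2) = |a| * c / 2 := by
    intro a c
    calc Real.sign a * (a * c / 2) = (Real.sign a * a) * c / 2 := by ring
    _ = |a| * c / 2 := by rw [sign_mul_self']
  have h' : ∀ s t : ℝ,
      (s = t + l ∨ (0 ≤ s ∧ s ≤ l ∧ -l ≤ t ∧ t ≤ 0 ∧ s - t < l)) →
      |up - v - t| * (up - v + t) ≤ |um - v - s| * (um - v + s) := by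
    intro s t hst
    have hcond : (v + s = (v + t) + l ∨
        (v ≤ v + s ∧ v + s ≤ v + l ∧ v - l ≤ v + t ∧ v + t ≤ v ∧ (v + s) - (v + t) < l)) := by
      rcases hst with h1 | ⟨h1, h2, h3, h4, h5⟩
      · left; linarith
      · right; exact ⟨by linarith, by linarith, by linarith, by linarith, by linarith⟩
    have hh := h (v + s) (v + t) hcond
    have e1 : Real.sign (um - (v + s)) * ((um ^ 2 / 2 - v * um) - ((v + s) ^ 2 / 2 - v * (v + s)))
        = |um - v - s| * (um - v + s) / 2 := by
      have ha : um - (v + s) = um - v - s := by ring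
      have hb : (um ^ 2 / 2 - v * um) - ((v + s) ^ 2 / 2 - v * (v + s))
          = (um - v - s) * (um - v + s) / 2 := by ring
      rw [ha, hb, key]
    have e2 : Real.sign (up - (v + t)) * ((up ^ 2 / 2 - v * up) - ((v + t) ^ 2 / 2 - v * (v + t)))
        = |up - v - t| * (up - v + t) / 2 := by
      have ha : up - (v + t) = up - v - t := by ring
      have hb : (up ^ 2 / 2 - v * up) - ((v + t) ^ 2 / 2 - v * (v + t))
          = (up - v - t) * (up - v + t) / 2 := by ring
      rw [ha, hb, key]
    rw [e1, e2] at hh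
    linarith
  -- um ≥ up, from the test point (v, v)
  have t0 := h' 0 0 (Or.inr ⟨le_refl 0, hl.le, by linarith, le_refl 0, by linarith⟩)
  simp only [sub_zero, add_zero] at t0
  have hxgey : up ≤ um := by
    have := abs_mul_le_imp (um - v) (up - v) t0
    linarith
  by_cases hc : um - up > l
  · -- third component of the germ
    have tA := h' (up - v + l) (up - v) (Or.inl (by ring))
    have tB := h' (um - v) (um - v - l) (Or.inl (by ring))
    have eA : up - v - (up - v) = 0 := by ring
    have eB : um - v - (um - v) = 0 := by ring
    rw [eA] at tA
    rw [eB] at tB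
    simp only [abs_zero, zero_mul] at tA tB
    have hA1 : um - v - (up - v + l) > 0 := by linarith
    have hB1 : up - v - (um - v - l) < 0 := by linarith
    rw [abs_of_pos hA1] at tA
    rw [abs_of_neg hB1] at tB
    right; right
    refine ⟨by nlinarith, by nlinarith, hc⟩
  · push_neg at hc
    by_cases heq : um = up + l
    · exact Or.inl heq
    have hlt : um - up < l := lt_of_le_of_ne hc (fun hne => heq (by linarith))
    -- general consequences of the two G¹ tests
    have tA := h' (up - v + l) (up - v) (Or.inl (by ring))
    have tB := h' (um - v) (um - v - l) (Or.inl (by ring))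
    have eA : up - v - (up - v) = 0 := by ring
    have eB : um - v - (um - v) = 0 := by ring
    rw [eA] at tA
    rw [eB] at tB
    simp only [abs_zero, zero_mul] at tA tB
    have hA1 : um - v - (up - v + l) < 0 := by linarith
    have hB1 : up - v - (um - v - l) > 0 := by linarith
    rw [abs_of_neg hA1] at tA
    rw [abs_of_pos hB1] at tB
    have hA : um + up - 2 * v ≥ -l := by nlinarith
    have hB : um + up - 2 * v ≤ l := by nlinarith
    have hxle : um ≤ v + l := by
      by_contra hx
      push_neg at hx
      nlinarith
    have hyge : v - l ≤ up := by linarith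
    have hyle : up ≤ v := by
      by_contra hy
      push_neg at hy
      rcases eq_or_lt_of_le hxle with h1 | h1
      · linarith
      · have tC := h' (um - v) 0
          (Or.inr ⟨by linarith, by linarith, by linarith, le_refl 0, by linarith⟩)
        rw [eB] at tC
        simp only [abs_zero, zero_mul, sub_zero, add_zero] at tC
        have : up - v > 0 := by linarith
        rw [abs_of_pos this] at tC
        nlinarith
    have hxge : v ≤ um := by
      by_contra hx
      push_neg at hx
      rcases eq_or_lt_of_le hyge with h1 | h1
      · linarith
      · have tD := h' 0 (up - v)
          (Or.inr ⟨le_refl 0, hl.le, by linarith, by linarith, by linarith⟩)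
        rw [eA] at tD
        simp only [abs_zero, zero_mul, sub_zero, add_zero] at tD
        have : um - v < 0 := by linarith
        rw [abs_of_neg this] at tD
        nlinarith
    exact Or.inr (Or.inl ⟨hxge, hxle, hyge, hyle, hlt⟩)
end

section
/- With g⁻_λ(u₋,u₊,v) = g(u₋, min(u₊+λ, max(u₋,v)), v) and g⁺_λ(u₋,u₊,v) = g(max(u₋−λ, min(u₊,v)), u₊, v), if g is nondecreasing in its first argument and nonincreasing in its second, then g⁻_λ and g⁺_λ are nondecreasing in their first arguments and nonincreasing in their second arguments. -/
private lemma glue2_mono (f : ℝ → ℝ) (c d : ℝ) (hcd : c ≤ d)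
    (h1 : ∀ a b : ℝ, a ≤ b → b ≤ c → f a ≤ f b)
    (h2 : ∀ a b : ℝ, c ≤ a → a ≤ b → b ≤ d → f a ≤ f b)
    (h3 : ∀ a b : ℝ, d ≤ a → a ≤ b → f a ≤ f b) : Monotone f := by
  intro a b hab
  rcases le_total b c with hbc | hcb
  · exact h1 a b hab hbc
  rcases le_total a c with hac | hca
  · rcases le_total b d with hbd | hdb
    · exact (h1 a c hac le_rfl).trans (h2 c b le_rfl hcb hbd)
    · exact ((h1 a c hac le_rfl).trans (h2 c d le_rfl hcd le_rfl)).trans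
        (h3 d b le_rfl hdb)
  · rcases le_total b d with hbd | hdb
    · exact h2 a b hca hab hbd
    · rcases le_total a d with had | hda
      · exact (h2 a d hca had le_rfl).trans (h3 d b le_rfl hdb)
      · exact h3 a b hda hab

private lemma glue2_anti (f : ℝ → ℝ) (c d : ℝ) (hcd : c ≤ d)
    (h1 : ∀ a b : ℝ, a ≤ b → b ≤ c → f b ≤ f a)
    (h2 : ∀ a b : ℝ, c ≤ a → a ≤ b → b ≤ d → f b ≤ f a)
    (h3 : ∀ a b : ℝ, d ≤ a → a ≤ b → f b ≤ f a) : Antitone f := by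
  intro a b hab
  rcases le_total b c with hbc | hcb
  · exact h1 a b hab hbc
  rcases le_total a c with hac | hca
  · rcases le_total b d with hbd | hdb
    · exact (h2 c b le_rfl hcb hbd).trans (h1 a c hac le_rfl)
    · exact ((h3 d b le_rfl hdb).trans (h2 c d le_rfl hcd le_rfl)).trans
        (h1 a c hac le_rfl)
  · rcases le_total b d with hbd | hdb
    · exact h2 a b hca hab hbd
    · rcases le_total a d with had | hda
      · exact (h3 d b le_rfl hdb).trans (h2 a d hca had le_rfl)
      · exact h3 a b hda hab

/-- Monotonicity of the modified fluxes `g⁻_λ`, `g⁺_λ`: nondecreasing in the first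
argument, nonincreasing in the second. -/
theorem modified_flux_monotone (l : ℝ) (hl : 0 < l) (g : ℝ → ℝ → ℝ → ℝ)
    (hmono1 : ∀ b v : ℝ, Monotone fun a => g a b v)
    (hmono2 : ∀ a v : ℝ, Antitone fun b => g a b v)
    (hcons : ∀ a v : ℝ, g a a v = a ^ 2 / 2 - v * a) (v : ℝ) :
    (∀ up : ℝ, Monotone fun um => g um (min (up + l) (max um v)) v) ∧
    (∀ um : ℝ, Antitone fun up => g um (min (up + l) (max um v)) v) ∧
    (∀ up : ℝ, Monotone fun um => g (max (um - l) (min up v)) up v) ∧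
    (∀ um : ℝ, Antitone fun up => g (max (um - l) (min up v)) up v) := by
  refine ⟨?_, ?_, ?_, ?_⟩
  · -- g⁻ monotone in u₋
    intro up
    set w := up + l with hw
    rcases le_total v w with hvw | hwv
    · refine glue2_mono _ v w hvw ?_ ?_ ?_
      · intro a b hab hbv
        rw [max_eq_right hbv, max_eq_right (hab.trans hbv), min_eq_right hvw]
        exact hmono1 v v hab
      · intro a b hva hab hbw
        rw [max_eq_left (hva.trans hab), max_eq_left hva,
          min_eq_right hbw, min_eq_right (hab.trans hbw), hcons, hcons]
        nlinarith [mul_nonneg (sub_nonneg.2 hab)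
          (by linarith : (0:ℝ) ≤ a + b - 2 * v)]
      · intro a b hwa hab
        rw [max_eq_left (hvw.trans hwa), max_eq_left (hvw.trans (hwa.trans hab)),
          min_eq_left hwa, min_eq_left (hwa.trans hab)]
        exact hmono1 w v hab
    · intro a b hab
      dsimp only
      rw [min_eq_left (hwv.trans (le_max_right a v)),
        min_eq_left (hwv.trans (le_max_right b v))]
      exact hmono1 w v hab
  · -- g⁻ antitone in u₊
    intro um a b hab
    simp only
    exact hmono2 um v (min_le_min (by linarith) le_rfl)
  · -- g⁺ monotone in u₋
    intro up a b hab
    simp only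
    exact hmono1 up v (max_le_max (by linarith) le_rfl)
  · -- g⁺ antitone in u₊
    intro um
    set c := um - l with hc
    rcases le_total c v with hcv | hvc
    · refine glue2_anti _ c v hcv ?_ ?_ ?_
      · intro a b hab hbc
        rw [min_eq_left (hbc.trans hcv), min_eq_left ((hab.trans hbc).trans hcv),
          max_eq_left hbc, max_eq_left (hab.trans hbc)]
        exact hmono2 c v hab
      · intro a b hca hab hbv
        rw [min_eq_left hbv, min_eq_left (hab.trans hbv),
          max_eq_right (hca.trans hab), max_eq_right hca, hcons, hcons]
        nlinarith [mul_nonpos_of_nonneg_of_nonpos (sub_nonneg.2 hab)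
          (by linarith : a + b - 2 * v ≤ 0)]
      · intro a b hva hab
        rw [min_eq_right hva, min_eq_right (hva.trans hab), max_eq_right hcv]
        exact hmono2 v v hab
    · intro a b hab
      dsimp only
      rw [max_eq_left ((min_le_right a v).trans hvc),
        max_eq_left ((min_le_right b v).trans hvc)]
      exact hmono2 c v hab
end

section
/- Velocity bound for the coupled particle update: suppose G := g⁻_λ − g⁺_λ is C¹ with ∂₁G ≥ 0, ∂₂G ≥ 0, and bounded partial derivatives: |∂₁G|, |∂₂G| ≤ 2L, and G(v,v,v) = 0 for all v. Let vⁿ⁺¹ = vⁿ + (Δt/m_p)·G(u₀,u₁,vⁿ). If vⁿ ≤ min(u₀,u₁), 4LΔt/m_p ≤ 1, and u₀, u₁ ≤ v̄ with vⁿ ≤ v̄, then vⁿ ≤ vⁿ⁺¹ ≤ v̄. -/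
/-!
Since `G` is nondecreasing in each of its first two arguments and vanishes on the diagonal,
moving `u₀` and then `u₁` down to `vⁿ` shows `0 ≤ G(u₀,u₁,vⁿ)`; the slope bound `2L` gives
`G(u₀,u₁,vⁿ) ≤ 2L(u₀ - vⁿ) + 2L(u₁ - vⁿ) ≤ 4L(v̄ - vⁿ)`. Hence the step `(Δt/m_p) G` is
nonnegative and, by the CFL-type condition `4LΔt/m_p ≤ 1`, at most `v̄ - vⁿ`.
-/

open Set

lemma sub_mem_Icc_of_hasDerivAt_mem_Icc {f f' : ℝ → ℝ} {K a b : ℝ}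
    (hf : ∀ x, HasDerivAt f (f' x) x) (hf' : ∀ x, f' x ∈ Icc 0 K) (hab : a ≤ b) :
    f b - f a ∈ Icc 0 (K * (b - a)) := by
  have hmono : Monotone f := monotone_of_hasDerivAt_nonneg hf fun x => (hf' x).1
  refine ⟨sub_nonneg.2 (hmono hab), ?_⟩
  refine image_sub_le_mul_sub_of_deriv_le (fun x => (hf x).differentiableAt) (fun x => ?_) hab
  rw [(hf x).deriv]
  exact (hf' x).2

lemma apply_mem_Icc_of_hasDerivAt_mem_Icc₂ {F dF₁ dF₂ : ℝ → ℝ → ℝ} {K v u₀ u₁ : ℝ}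
    (hF : F v v = 0)
    (hd₁ : ∀ a b, HasDerivAt (fun x => F x b) (dF₁ a b) a)
    (hd₂ : ∀ a b, HasDerivAt (fun y => F a y) (dF₂ a b) b)
    (hb₁ : ∀ a b, dF₁ a b ∈ Icc 0 K) (hb₂ : ∀ a b, dF₂ a b ∈ Icc 0 K)
    (hv₀ : v ≤ u₀) (hv₁ : v ≤ u₁) :
    F u₀ u₁ ∈ Icc 0 (K * (u₀ - v) + K * (u₁ - v)) := by
  obtain ⟨h₀, h₀'⟩ := sub_mem_Icc_of_hasDerivAt_mem_Icc (fun x => hd₁ x u₁) (hb₁ · u₁) hv₀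
  obtain ⟨h₁, h₁'⟩ := sub_mem_Icc_of_hasDerivAt_mem_Icc (fun y => hd₂ v y) (hb₂ v) hv₁
  simp only [hF] at h₁ h₁'
  constructor <;> linarith

lemma le_add_mul_le_of_le_mul_sub {v g c M vbar : ℝ} (hc : 0 ≤ c) (hcM : c * M ≤ 1)
    (hv : v ≤ vbar) (hg : g ∈ Icc 0 (M * (vbar - v))) :
    v ≤ v + c * g ∧ v + c * g ≤ vbar := by
  refine ⟨le_add_of_nonneg_right (mul_nonneg hc hg.1), ?_⟩
  calc v + c * g ≤ v + c * (M * (vbar - v)) := by gcongr; exact hg.2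
    _ = v + (c * M) * (vbar - v) := by ring
    _ ≤ v + 1 * (vbar - v) := by gcongr
    _ = vbar := by ring

theorem velocity_bound_below_general
    (G dG1 dG2 : ℝ → ℝ → ℝ → ℝ) (L mp dt : ℝ)
    (hmp : 0 < mp) (hdt : 0 < dt)
    (hG0 : ∀ v : ℝ, G v v v = 0)
    (hd1 : ∀ a b v : ℝ, HasDerivAt (fun x => G x b v) (dG1 a b v) a)
    (hd2 : ∀ a b v : ℝ, HasDerivAt (fun y => G a y v) (dG2 a b v) b)
    (hb1 : ∀ a b v : ℝ, 0 ≤ dG1 a b v ∧ dG1 a b v ≤ 2 * L)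
    (hb2 : ∀ a b v : ℝ, 0 ≤ dG2 a b v ∧ dG2 a b v ≤ 2 * L)
    (vn u0 u1 vbar : ℝ)
    (hvmin : vn ≤ min u0 u1) (hstep : 4 * L * dt / mp ≤ 1)
    (hu0 : u0 ≤ vbar) (hu1 : u1 ≤ vbar) :
    vn ≤ vn + dt / mp * G u0 u1 vn ∧ vn + dt / mp * G u0 u1 vn ≤ vbar := by
  obtain ⟨hv0, hv1⟩ := le_min_iff.1 hvmin
  have hL : 0 ≤ L := by linarith [hb1 0 0 0]
  have hG := apply_mem_Icc_of_hasDerivAt_mem_Icc₂ (F := fun x y => G x y vn) (hG0 vn)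
    (hd1 · · vn) (hd2 · · vn) (hb1 · · vn) (hb2 · · vn) hv0 hv1
  have hGle : G u0 u1 vn ∈ Icc 0 (4 * L * (vbar - vn)) :=
    ⟨hG.1, hG.2.trans (by nlinarith)⟩
  refine le_add_mul_le_of_le_mul_sub (div_nonneg hdt.le hmp.le) ?_ (hv0.trans hu0) hGle
  rwa [div_mul_eq_mul_div, mul_comm]

/-- Velocity bound for the coupled particle update: if `vⁿ ≤ min(u₀,u₁)` then
`vⁿ ≤ vⁿ⁺¹ ≤ v̄`, under `4LΔt/m_p ≤ 1`. -/
theorem velocity_bound_below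
    (G dG1 dG2 : ℝ → ℝ → ℝ → ℝ) (L mp dt : ℝ)
    (hL : 0 < L) (hmp : 0 < mp) (hdt : 0 < dt)
    (hG0 : ∀ v : ℝ, G v v v = 0)
    (hd1 : ∀ a b v : ℝ, HasDerivAt (fun x => G x b v) (dG1 a b v) a)
    (hd2 : ∀ a b v : ℝ, HasDerivAt (fun y => G a y v) (dG2 a b v) b)
    (hb1 : ∀ a b v : ℝ, 0 ≤ dG1 a b v ∧ dG1 a b v ≤ 2 * L)
    (hb2 : ∀ a b v : ℝ, 0 ≤ dG2 a b v ∧ dG2 a b v ≤ 2 * L)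
    (vn u0 u1 vbar : ℝ)
    (hvmin : vn ≤ min u0 u1) (hstep : 4 * L * dt / mp ≤ 1)
    (hu0 : u0 ≤ vbar) (hu1 : u1 ≤ vbar) (hvn : vn ≤ vbar) :
    vn ≤ vn + dt / mp * G u0 u1 vn ∧ vn + dt / mp * G u0 u1 vn ≤ vbar :=
  velocity_bound_below_general G dG1 dG2 L mp dt hmp hdt hG0 hd1 hd2 hb1 hb2 vn u0 u1 vbar hvmin
    hstep hu0 hu1
end

section
/- Velocity trapping between fluid values: under the hypotheses that G = g⁻_λ − g⁺_λ satisfies G(v,v,v) = 0, 0 ≤ ∂₁G ≤ 2L, 0 ≤ ∂₂G ≤ 2L, and 4LΔt/m_p ≤ 1, if u₀ ≤ vⁿ ≤ u₁ and v̲ ≤ u₀, u₁ ≤ v̄ with v̲ ≤ vⁿ ≤ v̄, then the update vⁿ⁺¹ = vⁿ + (Δt/m_p)G(u₀,u₁,vⁿ) satisfies v̲ ≤ vⁿ − 2L(Δt/m_p)(vⁿ−u₀) ≤ vⁿ⁺¹ ≤ vⁿ + 2L(Δt/m_p)(u₁−vⁿ) ≤ v̄. -/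
lemma deriv_sandwich (f f' : ℝ → ℝ) (M : ℝ)
    (hf : ∀ x, HasDerivAt f (f' x) x)
    (h0 : ∀ x, 0 ≤ f' x) (hM : ∀ x, f' x ≤ M)
    (a b : ℝ) (hab : a ≤ b) :
    0 ≤ f b - f a ∧ f b - f a ≤ M * (b - a) := by
  have hd : ∀ x ∈ interior (Set.univ : Set ℝ), 0 ≤ deriv f x := by
    intro x _; rw [(hf x).deriv]; exact h0 x
  have hd' : ∀ x ∈ interior (Set.univ : Set ℝ), deriv f x ≤ M := by
    intro x _; rw [(hf x).deriv]; exact hM x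
  have hdiff : DifferentiableOn ℝ f Set.univ := fun x _ => (hf x).differentiableAt.differentiableWithinAt
  constructor
  · have := convex_univ.mul_sub_le_image_sub_of_le_deriv hdiff.continuousOn (hdiff.mono interior_subset) hd
      a trivial b trivial hab
    linarith
  · exact convex_univ.image_sub_le_mul_sub_of_deriv_le hdiff.continuousOn (hdiff.mono interior_subset) hd'
      a trivial b trivial hab

/-- Velocity trapping between the fluid values: if `u₀ ≤ vⁿ ≤ u₁` then
`v̲ ≤ vⁿ − 2L(Δt/m_p)(vⁿ−u₀) ≤ vⁿ⁺¹ ≤ vⁿ + 2L(Δt/m_p)(u₁−vⁿ) ≤ v̄`. -/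
theorem velocity_trapping
    (G dG1 dG2 : ℝ → ℝ → ℝ → ℝ) (L mp dt : ℝ)
    (hL : 0 < L) (hmp : 0 < mp) (hdt : 0 < dt)
    (hG0 : ∀ v : ℝ, G v v v = 0)
    (hd1 : ∀ a b v : ℝ, HasDerivAt (fun x => G x b v) (dG1 a b v) a)
    (hd2 : ∀ a b v : ℝ, HasDerivAt (fun y => G a y v) (dG2 a b v) b)
    (hb1 : ∀ a b v : ℝ, 0 ≤ dG1 a b v ∧ dG1 a b v ≤ 2 * L)
    (hb2 : ∀ a b v : ℝ, 0 ≤ dG2 a b v ∧ dG2 a b v ≤ 2 * L)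
    (vn u0 u1 vlow vbar : ℝ)
    (hstep : 4 * L * dt / mp ≤ 1)
    (h01 : u0 ≤ vn) (h02 : vn ≤ u1)
    (hl0 : vlow ≤ u0) (hl1 : vlow ≤ u1) (hu0 : u0 ≤ vbar) (hu1 : u1 ≤ vbar)
    (hvl : vlow ≤ vn) (hvb : vn ≤ vbar) :
    vlow ≤ vn - 2 * L * (dt / mp) * (vn - u0) ∧
    vn - 2 * L * (dt / mp) * (vn - u0) ≤ vn + dt / mp * G u0 u1 vn ∧
    vn + dt / mp * G u0 u1 vn ≤ vn + 2 * L * (dt / mp) * (u1 - vn) ∧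
    vn + 2 * L * (dt / mp) * (u1 - vn) ≤ vbar := by
  -- first variable: G vn u1 vn - G u0 u1 vn ∈ [0, 2L(vn-u0)]
  have h1 := deriv_sandwich (fun x => G x u1 vn) (fun x => dG1 x u1 vn) (2 * L)
    (fun x => hd1 x u1 vn) (fun x => (hb1 x u1 vn).1) (fun x => (hb1 x u1 vn).2) u0 vn h01
  -- second variable: G vn u1 vn - G vn vn vn ∈ [0, 2L(u1-vn)]
  have h2 := deriv_sandwich (fun y => G vn y vn) (fun y => dG2 vn y vn) (2 * L)
    (fun y => hd2 vn y vn) (fun y => (hb2 vn y vn).1) (fun y => (hb2 vn y vn).2) vn u1 h02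
  simp only [hG0 vn] at h2
  have hGlo : -(2 * L * (vn - u0)) ≤ G u0 u1 vn := by
    have := h1.2; have := h2.1; linarith
  have hGhi : G u0 u1 vn ≤ 2 * L * (u1 - vn) := by
    have := h1.1; have := h2.2; linarith
  have hdm : 0 < dt / mp := div_pos hdt hmp
  have hc : 2 * L * (dt / mp) ≤ 1 := by
    rw [div_le_one hmp] at hstep
    have : 2 * L * (dt / mp) = 2 * L * dt / mp := by ring
    rw [this, div_le_one hmp]; nlinarith
  refine ⟨?_, ?_, ?_, ?_⟩
  · nlinarith [mul_nonneg (mul_nonneg (by linarith : (0:ℝ) ≤ 2 * L) hdm.le) (sub_nonneg.2 h01)]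
  · nlinarith [mul_le_mul_of_nonneg_left hGlo hdm.le]
  · nlinarith [mul_le_mul_of_nonneg_left hGhi hdm.le]
  · nlinarith [mul_nonneg (mul_nonneg (by linarith : (0:ℝ) ≤ 2 * L) hdm.le) (sub_nonneg.2 h02)]
end

section
/- Implicit update velocity bound without time-step restriction: suppose vⁿ⁺¹ satisfies vⁿ⁺¹ = vⁿ + (Δt/m_p)G(u₀,u₁,vⁿ⁺¹) and vⁿ⁺¹ ≤ min(u₀,u₁). If G(v,v,v) = 0 and 0 ≤ ∂ᵢG ≤ 2L for i = 1,2, and u₀,u₁ ≤ v̄, vⁿ ≤ v̄, then vⁿ⁺¹ ≤ (vⁿ + 2L(Δt/m_p)(u₀+u₁)) / (1 + 4LΔt/m_p) ≤ v̄, with no constraint on Δt beyond positivity. -/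
/-!
Since both partial derivatives of `G` lie in `[0, 2L]` and `vⁿ⁺¹` lies below `u₀` and `u₁`,
the mean value theorem, applied one argument at a time, gives
`G(u₀, u₁, vⁿ⁺¹) ≤ 2L (u₀ - vⁿ⁺¹) + 2L (u₁ - vⁿ⁺¹)`, using `G(vⁿ⁺¹, vⁿ⁺¹, vⁿ⁺¹) = 0`.
Inserted in the implicit update, this moves `4L (Δt/m_p) vⁿ⁺¹` to the left-hand side, and the
resulting bound is a weighted average of `vⁿ, u₀, u₁`, hence at most `v̄`, whatever `Δt > 0` is.
-/

theorem image_sub_le_mul_sub_of_hasDerivAt_le {f f' : ℝ → ℝ} {C : ℝ}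
    (hf : ∀ x, HasDerivAt f (f' x) x) (hf'C : ∀ x, f' x ≤ C) {x y : ℝ} (hxy : x ≤ y) :
    f y - f x ≤ C * (y - x) :=
  image_sub_le_mul_sub_of_deriv_le (fun x => (hf x).differentiableAt)
    (fun x => (hf x).deriv ▸ hf'C x) hxy

theorem image₂_sub_le_of_hasDerivAt_le {F F₁ F₂ : ℝ → ℝ → ℝ} {C : ℝ}
    (hF₁ : ∀ a b, HasDerivAt (fun x => F x b) (F₁ a b) a)
    (hF₂ : ∀ a b, HasDerivAt (fun y => F a y) (F₂ a b) b)
    (hF₁C : ∀ a b, F₁ a b ≤ C) (hF₂C : ∀ a b, F₂ a b ≤ C)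
    {x y a b : ℝ} (hxa : x ≤ a) (hyb : y ≤ b) :
    F a b - F x y ≤ C * (a - x) + C * (b - y) := by
  have h₁ : F a b - F x b ≤ C * (a - x) :=
    image_sub_le_mul_sub_of_hasDerivAt_le (fun x => hF₁ x b) (fun x => hF₁C x b) hxa
  have h₂ : F x b - F x y ≤ C * (b - y) :=
    image_sub_le_mul_sub_of_hasDerivAt_le (fun y => hF₂ x y) (fun y => hF₂C x y) hyb
  linarith

section ImplicitStep

variable {K c w v a b : ℝ}

theorem le_div_of_le_add_mul_sub (hK : 0 ≤ K) (hc : 0 ≤ c)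
    (h : v ≤ w + c * (K * (a - v) + K * (b - v))) :
    v ≤ (w + K * c * (a + b)) / (1 + 2 * K * c) := by
  rw [le_div_iff₀ (by positivity)]
  linarith

theorem div_le_of_le_of_le_of_le {M : ℝ} (hK : 0 ≤ K) (hc : 0 ≤ c)
    (hw : w ≤ M) (ha : a ≤ M) (hb : b ≤ M) :
    (w + K * c * (a + b)) / (1 + 2 * K * c) ≤ M := by
  have hKc : 0 ≤ K * c := mul_nonneg hK hc
  rw [div_le_iff₀ (by positivity)]
  nlinarith

end ImplicitStep

/-- Implicit update: velocity bound without time-step restriction. -/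
theorem implicit_velocity_bound
    (G dG1 dG2 : ℝ → ℝ → ℝ → ℝ) (L mp dt : ℝ)
    (hL : 0 < L) (hmp : 0 < mp) (hdt : 0 < dt)
    (hG0 : ∀ v : ℝ, G v v v = 0)
    (hd1 : ∀ a b v : ℝ, HasDerivAt (fun x => G x b v) (dG1 a b v) a)
    (hd2 : ∀ a b v : ℝ, HasDerivAt (fun y => G a y v) (dG2 a b v) b)
    (hb1 : ∀ a b v : ℝ, 0 ≤ dG1 a b v ∧ dG1 a b v ≤ 2 * L)
    (hb2 : ∀ a b v : ℝ, 0 ≤ dG2 a b v ∧ dG2 a b v ≤ 2 * L)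
    (vn vnp1 u0 u1 vbar : ℝ)
    (himp : vnp1 = vn + dt / mp * G u0 u1 vnp1)
    (hle : vnp1 ≤ min u0 u1)
    (hu0 : u0 ≤ vbar) (hu1 : u1 ≤ vbar) (hvn : vn ≤ vbar) :
    vnp1 ≤ (vn + 2 * L * (dt / mp) * (u0 + u1)) / (1 + 4 * L * dt / mp) ∧
    (vn + 2 * L * (dt / mp) * (u0 + u1)) / (1 + 4 * L * dt / mp) ≤ vbar := by
  obtain ⟨hle0, hle1⟩ := le_min_iff.1 hle
  have h2L : 0 ≤ 2 * L := by positivity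
  have hc : 0 ≤ dt / mp := by positivity
  have hG : G u0 u1 vnp1 ≤ 2 * L * (u0 - vnp1) + 2 * L * (u1 - vnp1) := by
    have := image₂_sub_le_of_hasDerivAt_le (F := fun a b => G a b vnp1)
      (fun a b => hd1 a b vnp1) (fun a b => hd2 a b vnp1)
      (fun a b => (hb1 a b vnp1).2) (fun a b => (hb2 a b vnp1).2) hle0 hle1
    simpa only [hG0, sub_zero] using this
  have hstep : vnp1 ≤ vn + dt / mp * (2 * L * (u0 - vnp1) + 2 * L * (u1 - vnp1)) :=
    himp.trans_le (add_le_add_right (mul_le_mul_of_nonneg_left hG hc) vn)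
  have hden : 1 + 4 * L * dt / mp = 1 + 2 * (2 * L) * (dt / mp) := by ring
  rw [hden]
  exact ⟨le_div_of_le_add_mul_sub h2L hc hstep,
    div_le_of_le_of_le_of_le h2L hc hvn hu0 hu1⟩
end

section
/- Invariance of the ordered band under the one-way scheme: let H_λ(a,b,c,v) = b − μ(g(b,c,v) − g(a,b,v)) be monotone in (a,b,c) under CFL Lμ ≤ 1/2. Suppose (c_jⁿ)_{j∈ℤ} is nondecreasing for j ≤ 0 and for j ≥ 1, with c₋ ≤ c_jⁿ ≤ c₋+λ for j ≤ 0, c₊−λ ≤ c_jⁿ ≤ c₊ for j ≥ 1, c₀ⁿ − c₁ⁿ ≤ λ, and c₊ ≤ c₋ ≤ c₊+λ. Then the updated sequence defined by c_jⁿ⁺¹ = H_λ(c_{j−1}ⁿ, c_jⁿ, c_{j+1}ⁿ, v) for j ∉ {0,1}, c₀ⁿ⁺¹ = H_λ(c₋₁ⁿ, c₀ⁿ, c₁ⁿ+λ, v), c₁ⁿ⁺¹ = H_λ(c₀ⁿ−λ, c₁ⁿ, c₂ⁿ, v), satisfies the same properties, including c₀ⁿ⁺¹ − c₁ⁿ⁺¹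 ≤ λ. -/
/-!
Near the interface the scheme is the plain three-point stencil applied to two ghost sequences:
on the left `c 1` is replaced by `c 1 + l`, on the right `c 0` is replaced by `c 0 - l`.
Since `c 1 ≤ c 0 ≤ c 1 + l`, each ghost sequence is still nondecreasing and still lies in its
band, and a monotone stencil that fixes constants preserves both properties. For the jump, the
Lipschitz bounds on the flux show that the ghost values push `c' 0` and `c' 1` apart by at most
`2 μ L (l - (c 0 - c 1)) ≤ l - (c 0 - c 1)`.
-/

open Set Function

section Stencil

variable {α : Type*} [Preorder α]

def stencilUpdate (H : α → α → α → α) (u : ℤ → α) (j : ℤ) : α :=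
  H (u (j - 1)) (u j) (u (j + 1))

def MonotoneStencil (H : α → α → α → α) : Prop :=
  ∀ ⦃a a' b b' d d'⦄, a ≤ a' → b ≤ b' → d ≤ d' → H a b d ≤ H a' b' d'

variable {H : α → α → α → α} {u : ℤ → α} {n : ℤ}

theorem stencilUpdate_monotoneOn_Iic
    (hH : MonotoneStencil H)
    (hu : MonotoneOn u (Iic (n + 1))) : MonotoneOn (stencilUpdate H u) (Iic n) := by
  intro i hi j hj hij
  simp only [mem_Iic] at hi hj
  exact hH (hu (by simp only [mem_Iic]; omega) (by simp only [mem_Iic]; omega) (by omega))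
    (hu (by simp only [mem_Iic]; omega) (by simp only [mem_Iic]; omega) hij)
    (hu (by simp only [mem_Iic]; omega) (by simp only [mem_Iic]; omega) (by omega))

theorem stencilUpdate_monotoneOn_Ici
    (hH : MonotoneStencil H)
    (hu : MonotoneOn u (Ici (n - 1))) : MonotoneOn (stencilUpdate H u) (Ici n) := by
  intro i hi j hj hij
  simp only [mem_Ici] at hi hj
  exact hH (hu (by simp only [mem_Ici]; omega) (by simp only [mem_Ici]; omega) (by omega))
    (hu (by simp only [mem_Ici]; omega) (by simp only [mem_Ici]; omega) hij)
    (hu (by simp only [mem_Ici]; omega) (by simp only [mem_Ici]; omega) (by omega))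

theorem stencilUpdate_mem_Icc {lo hi : α} {j : ℤ}
    (hH : MonotoneStencil H)
    (hfix : ∀ x, H x x x = x) (hl : u (j - 1) ∈ Icc lo hi) (hc : u j ∈ Icc lo hi)
    (hr : u (j + 1) ∈ Icc lo hi) : stencilUpdate H u j ∈ Icc lo hi :=
  ⟨hfix lo ▸ hH hl.1 hc.1 hr.1, hfix hi ▸ hH hl.2 hc.2 hr.2⟩

theorem stencilUpdate_mapsTo_Iic {lo hi : α}
    (hH : MonotoneStencil H)
    (hfix : ∀ x, H x x x = x) (hu : MapsTo u (Iic (n + 1)) (Icc lo hi)) :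
    MapsTo (stencilUpdate H u) (Iic n) (Icc lo hi) := by
  intro j hj
  simp only [mem_Iic] at hj
  exact stencilUpdate_mem_Icc hH hfix (hu (by simp only [mem_Iic]; omega))
    (hu (by simp only [mem_Iic]; omega)) (hu (by simp only [mem_Iic]; omega))

theorem stencilUpdate_mapsTo_Ici {lo hi : α}
    (hH : MonotoneStencil H)
    (hfix : ∀ x, H x x x = x) (hu : MapsTo u (Ici (n - 1)) (Icc lo hi)) :
    MapsTo (stencilUpdate H u) (Ici n) (Icc lo hi) := by
  intro j hj
  simp only [mem_Ici] at hj
  exact stencilUpdate_mem_Icc hH hfix (hu (by simp only [mem_Ici]; omega))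
    (hu (by simp only [mem_Ici]; omega)) (hu (by simp only [mem_Ici]; omega))

end Stencil

section Ghost

variable {α : Type*} {u : ℤ → α} {n : ℤ} {x : α}

theorem monotoneOn_update_add_one [Preorder α] (hu : MonotoneOn u (Iic n)) (hx : u n ≤ x) :
    MonotoneOn (update u (n + 1) x) (Iic (n + 1)) := by
  intro i hi j hj hij
  simp only [mem_Iic] at hi hj
  rcases eq_or_ne j (n + 1) with rfl | hjn
  · rcases eq_or_ne i (n + 1) with rfl | hin
    · exact le_rfl
    rw [update_of_ne hin, update_self]
    exact (hu (by simp only [mem_Iic]; omega) self_mem_Iic (by omega)).trans hx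
  · rw [update_of_ne hjn, update_of_ne (by omega)]
    exact hu (by simp only [mem_Iic]; omega) (by simp only [mem_Iic]; omega) hij

theorem monotoneOn_update_sub_one [Preorder α] (hu : MonotoneOn u (Ici n)) (hx : x ≤ u n) :
    MonotoneOn (update u (n - 1) x) (Ici (n - 1)) := by
  intro i hi j hj hij
  simp only [mem_Ici] at hi hj
  rcases eq_or_ne i (n - 1) with rfl | hin
  · rcases eq_or_ne j (n - 1) with rfl | hjn
    · exact le_rfl
    rw [update_of_ne hjn, update_self]
    exact hx.trans (hu self_mem_Ici (by simp only [mem_Ici]; omega) (by omega))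
  · rw [update_of_ne hin, update_of_ne (by omega)]
    exact hu (by simp only [mem_Ici]; omega) (by simp only [mem_Ici]; omega) hij

theorem eqOn_stencilUpdate_update_add_one {H : α → α → α → α} {v : ℤ → α}
    (hv : ∀ j < n, v j = stencilUpdate H u j) (hn : v n = H (u (n - 1)) (u n) x) :
    EqOn v (stencilUpdate H (update u (n + 1) x)) (Iic n) := by
  intro j hj
  rcases (mem_Iic.mp hj).eq_or_lt with rfl | hjn
  · rw [hn, stencilUpdate, update_self, update_of_ne (by omega), update_of_ne (by omega)]
  · rw [hv j hjn, stencilUpdate, stencilUpdate, update_of_ne (by omega), update_of_ne (by omega),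
      update_of_ne (by omega)]

theorem eqOn_stencilUpdate_update_sub_one {H : α → α → α → α} {v : ℤ → α}
    (hv : ∀ j > n, v j = stencilUpdate H u j) (hn : v n = H x (u n) (u (n + 1))) :
    EqOn v (stencilUpdate H (update u (n - 1) x)) (Ici n) := by
  intro j hj
  rcases (mem_Ici.mp hj).eq_or_lt with rfl | hjn
  · rw [hn, stencilUpdate, update_self, update_of_ne (by omega), update_of_ne (by omega)]
  · rw [hv j hjn, stencilUpdate, stencilUpdate, update_of_ne (by omega), update_of_ne (by omega),
      update_of_ne (by omega)]

theorem mapsTo_update_add_one {t : Set α} (hu : MapsTo u (Iic n) t) (hx : x ∈ t) :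
    MapsTo (update u (n + 1) x) (Iic (n + 1)) t := by
  intro j hj
  rcases eq_or_ne j (n + 1) with rfl | hjn
  · rwa [update_self]
  · rw [update_of_ne hjn]
    exact hu (by simp only [mem_Iic] at hj ⊢; omega)

theorem mapsTo_update_sub_one {t : Set α} (hu : MapsTo u (Ici n) t) (hx : x ∈ t) :
    MapsTo (update u (n - 1) x) (Ici (n - 1)) t := by
  intro j hj
  rcases eq_or_ne j (n - 1) with rfl | hjn
  · rwa [update_self]
  · rw [update_of_ne hjn]
    exact hu (by simp only [mem_Ici] at hj ⊢; omega)

end Ghost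

def conservativeUpdate (μ : ℝ) (F : ℝ → ℝ → ℝ) (a b d : ℝ) : ℝ :=
  b - μ * (F b d - F a b)

theorem conservativeUpdate_self (μ : ℝ) (F : ℝ → ℝ → ℝ) (x : ℝ) :
    conservativeUpdate μ F x x x = x := by
  simp [conservativeUpdate]

theorem conservativeUpdate_sub_conservativeUpdate_le {μ L l x y : ℝ} {F : ℝ → ℝ → ℝ}
    (hμ : 0 ≤ μ) (hcfl : L * μ ≤ 1 / 2)
    (hlip1 : ∀ a a' b, |F a b - F a' b| ≤ L * |a - a'|)
    (hlip2 : ∀ a b b', |F a b - F a b'| ≤ L * |b - b'|) (hxy : x - y ≤ l) :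
    conservativeUpdate μ F x x (y + l) - conservativeUpdate μ F (x - l) y y ≤ l := by
  set t := l - (x - y)
  have ht0 : 0 ≤ t := by linarith
  have hleft : -(L * t) ≤ F x (y + l) - F x x := by
    have h := hlip2 x (y + l) x
    rw [show y + l - x = t by ring, abs_of_nonneg ht0] at h
    exact (abs_le.mp h).1
  have hright : F y y - F (x - l) y ≤ L * t := by
    have h := hlip1 y (x - l) y
    rw [show y - (x - l) = t by ring, abs_of_nonneg ht0] at h
    exact (abs_le.mp h).2
  have hleft' := mul_le_mul_of_nonneg_left hleft hμ
  have hright' := mul_le_mul_of_nonneg_left hright hμ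
  have hcfl' := mul_le_mul_of_nonneg_right hcfl ht0
  simp only [conservativeUpdate]
  linarith

theorem one_way_scheme_invariance_general
    (l μ L v cm cp : ℝ) (g : ℝ → ℝ → ℝ → ℝ) (c c' : ℤ → ℝ)
    (hμ : 0 < μ) (hcfl : L * μ ≤ 1 / 2)
    (hmono : ∀ a a' b b' d d' : ℝ, a ≤ a' → b ≤ b' → d ≤ d' →
      b - μ * (g b d v - g a b v) ≤ b' - μ * (g b' d' v - g a' b' v))
    (hlip1 : ∀ a a' b : ℝ, |g a b v - g a' b v| ≤ L * |a - a'|)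
    (hlip2 : ∀ a b b' : ℝ, |g a b v - g a b' v| ≤ L * |b - b'|)
    (hcmp : cp ≤ cm)
    (hmono_neg : ∀ i j : ℤ, i ≤ j → j ≤ 0 → c i ≤ c j)
    (hmono_pos : ∀ i j : ℤ, 1 ≤ i → i ≤ j → c i ≤ c j)
    (hbnd_neg : ∀ j : ℤ, j ≤ 0 → cm ≤ c j ∧ c j ≤ cm + l)
    (hbnd_pos : ∀ j : ℤ, 1 ≤ j → cp - l ≤ c j ∧ c j ≤ cp)
    (hjump : c 0 - c 1 ≤ l)
    (hupd : ∀ j : ℤ, j ≠ 0 → j ≠ 1 →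
      c' j = c j - μ * (g (c j) (c (j + 1)) v - g (c (j - 1)) (c j) v))
    (hupd0 : c' 0 = c 0 - μ * (g (c 0) (c 1 + l) v - g (c (-1)) (c 0) v))
    (hupd1 : c' 1 = c 1 - μ * (g (c 1) (c 2) v - g (c 0 - l) (c 1) v)) :
    (∀ i j : ℤ, i ≤ j → j ≤ 0 → c' i ≤ c' j) ∧
    (∀ i j : ℤ, 1 ≤ i → i ≤ j → c' i ≤ c' j) ∧
    (∀ j : ℤ, j ≤ 0 → cm ≤ c' j ∧ c' j ≤ cm + l) ∧
    (∀ j : ℤ, 1 ≤ j → cp - l ≤ c' j ∧ c' j ≤ cp) ∧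
    c' 0 - c' 1 ≤ l := by
  set H := conservativeUpdate μ (fun a b => g a b v)
  have hH : MonotoneStencil H := fun _ _ _ _ _ _ => hmono _ _ _ _ _ _
  have hfix : ∀ x, H x x x = x := conservativeUpdate_self _ _
  have hc0 := hbnd_neg 0 le_rfl
  have hc1 := hbnd_pos 1 le_rfl
  have hcL : EqOn c' (stencilUpdate H (update c (0 + 1) (c 1 + l))) (Iic 0) :=
    eqOn_stencilUpdate_update_add_one (fun j hj => hupd j (by omega) (by omega)) hupd0
  have hcR : EqOn c' (stencilUpdate H (update c (1 - 1) (c 0 - l))) (Ici 1) :=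
    eqOn_stencilUpdate_update_sub_one (fun j hj => hupd j (by omega) (by omega)) hupd1
  have hmono_L : MonotoneOn c' (Iic 0) :=
    (stencilUpdate_monotoneOn_Iic hH (monotoneOn_update_add_one
      (fun i _ j hj hij => hmono_neg i j hij hj) (by linarith))).congr hcL.symm
  have hmono_R : MonotoneOn c' (Ici 1) :=
    (stencilUpdate_monotoneOn_Ici hH (monotoneOn_update_sub_one
      (fun i hi j _ hij => hmono_pos i j hi hij) (by linarith))).congr hcR.symm
  have hbnd_L : MapsTo c' (Iic 0) (Icc cm (cm + l)) :=
    (stencilUpdate_mapsTo_Iic hH hfix (mapsTo_update_add_one (fun j hj => hbnd_neg j hj)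
      ⟨by linarith, by linarith⟩)).congr hcL.symm
  have hbnd_R : MapsTo c' (Ici 1) (Icc (cp - l) cp) :=
    (stencilUpdate_mapsTo_Ici hH hfix (mapsTo_update_sub_one (fun j hj => hbnd_pos j hj)
      ⟨by linarith, by linarith⟩)).congr hcR.symm
  have hjump' : c' 0 - c' 1 ≤ H (c 0) (c 0) (c 1 + l) - H (c 0 - l) (c 1) (c 1) := by
    rw [hupd0, hupd1]
    exact sub_le_sub (hH (hmono_neg (-1) 0 (by norm_num) le_rfl) le_rfl le_rfl)
      (hH le_rfl le_rfl (hmono_pos 1 2 le_rfl (by norm_num)))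
  refine ⟨fun i j hij hj => hmono_L (by simp only [mem_Iic]; omega) hj hij,
    fun i j hi hij => hmono_R hi (by simp only [mem_Ici]; omega) hij,
    fun j hj => hbnd_L hj, fun j hj => hbnd_R hj, ?_⟩
  exact hjump'.trans (conservativeUpdate_sub_conservativeUpdate_le hμ.le hcfl hlip1 hlip2 hjump)

/-- Invariance of the ordered band under the one-way scheme around the particle. -/
theorem one_way_scheme_invariance
    (l μ L v cm cp : ℝ) (g : ℝ → ℝ → ℝ → ℝ) (c c' : ℤ → ℝ)
    (hl : 0 < l) (hμ : 0 < μ) (hL : 0 < L) (hcfl : L * μ ≤ 1 / 2)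
    (hmono : ∀ a a' b b' d d' : ℝ, a ≤ a' → b ≤ b' → d ≤ d' →
      b - μ * (g b d v - g a b v) ≤ b' - μ * (g b' d' v - g a' b' v))
    (hlip1 : ∀ a a' b : ℝ, |g a b v - g a' b v| ≤ L * |a - a'|)
    (hlip2 : ∀ a b b' : ℝ, |g a b v - g a b' v| ≤ L * |b - b'|)
    (hcmp : cp ≤ cm) (hcml : cm ≤ cp + l)
    (hmono_neg : ∀ i j : ℤ, i ≤ j → j ≤ 0 → c i ≤ c j)
    (hmono_pos : ∀ i j : ℤ, 1 ≤ i → i ≤ j → c i ≤ c j)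
    (hbnd_neg : ∀ j : ℤ, j ≤ 0 → cm ≤ c j ∧ c j ≤ cm + l)
    (hbnd_pos : ∀ j : ℤ, 1 ≤ j → cp - l ≤ c j ∧ c j ≤ cp)
    (hjump : c 0 - c 1 ≤ l)
    (hupd : ∀ j : ℤ, j ≠ 0 → j ≠ 1 →
      c' j = c j - μ * (g (c j) (c (j + 1)) v - g (c (j - 1)) (c j) v))
    (hupd0 : c' 0 = c 0 - μ * (g (c 0) (c 1 + l) v - g (c (-1)) (c 0) v))
    (hupd1 : c' 1 = c 1 - μ * (g (c 1) (c 2) v - g (c 0 - l) (c 1) v)) :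
    (∀ i j : ℤ, i ≤ j → j ≤ 0 → c' i ≤ c' j) ∧
    (∀ i j : ℤ, 1 ≤ i → i ≤ j → c' i ≤ c' j) ∧
    (∀ j : ℤ, j ≤ 0 → cm ≤ c' j ∧ c' j ≤ cm + l) ∧
    (∀ j : ℤ, 1 ≤ j → cp - l ≤ c' j ∧ c' j ≤ cp) ∧
    c' 0 - c' 1 ≤ l :=
  one_way_scheme_invariance_general l μ L v cm cp g c c' hμ hcfl hmono hlip1 hlip2 hcmp hmono_neg
    hmono_pos hbnd_neg hbnd_pos hjump hupd hupd0 hupd1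
end

section
/- Symmetry preservation: suppose the flux satisfies g(v−A, v−B, v) = g(v+B, v+A, v) for all A, B, v. If the data at step n satisfies vⁿ = (u₋+u₊)/2 and the antisymmetry u_{−j}ⁿ − vⁿ = vⁿ − u_{j+1}ⁿ for all j ≤ 0 (in particular u₀ⁿ + u₁ⁿ = 2vⁿ), then the particle update vⁿ⁺¹ = vⁿ + (Δt/m_p)(g(u₀ⁿ, u₁ⁿ+λ, vⁿ) − g(u₀ⁿ−λ, u₁ⁿ, vⁿ)) satisfies vⁿ⁺¹ = vⁿ. -/
/-- Symmetry preservation: with the flux symmetry `g(v−A, v−B, v) = g(v+B, v+A, v)`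
and antisymmetric data `u₀ + u₁ = 2vⁿ`, the particle velocity is unchanged. -/
theorem symmetry_preserves_velocity
    (g : ℝ → ℝ → ℝ → ℝ) (l mp dt : ℝ) (hl : 0 < l) (hmp : 0 < mp) (hdt : 0 < dt)
    (hsym : ∀ A B v : ℝ, g (v - A) (v - B) v = g (v + B) (v + A) v)
    (u0 u1 vn : ℝ) (hdata : u0 + u1 = 2 * vn) :
    vn + dt / mp * (g u0 (u1 + l) vn - g (u0 - l) u1 vn) = vn := by
  have h := hsym (vn - u0) (vn - (u1 + l)) vn
  have e1 : vn - (vn - u0) = u0 := by ring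
  have e2 : vn - (vn - (u1 + l)) = u1 + l := by ring
  have e3 : vn + (vn - (u1 + l)) = u0 - l := by linarith
  have e4 : vn + (vn - u0) = u1 := by linarith
  rw [e1, e2, e3, e4] at h
  rw [h]
  ring
end
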